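/- One has w(0,0) = ((q−1)/ℓ^m)·((p−1)ℓ^m − pℓ + p) if ℓ ≡ 1 (mod p), and w(0,0) = ((q−1)/ℓ^{m−1})·((p−1)ℓ^{m−1} − p) if ℓ ≢ 1 (mod p). -/

import Mathlib

/-!
Put `d = (q - 1) / N`. Since `α = 0`, `w(0,0) = ∑_{x ∈ F_q^*} ∑_{y ∈ F_p^*} ζ_p ^ (y · Tr(x^d))`,
and the inner sum is `p - 1` or `-1` according as `Tr(x^d)` vanishes or not, so
`w(0,0) = (p - 1)(q - 1) - p · #{x | Tr(x^d) ≠ 0}`.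

For an `N`-th root of unity `u`, `Tr u = ∑_{i < φ(N)} u ^ (p ^ i)`, and as `p` generates `(ℤ/N)ˣ`
this is the sum of `u ^ k` over the `k < N` coprime to `N`. Inclusion–exclusion over the primes
`2` and `ℓ` evaluates it: it vanishes unless `u ^ (2ℓ) = 1`, it is `±ℓ^(m-1)` for the other
`2ℓ`-th roots of unity `u ≠ ±1`, and `±(ℓ - 1)ℓ^(m-1)` for `u = ±1`, which is zero in `F_p`
exactly when `ℓ ≡ 1 (mod p)`. Counting solutions of `x ^ (dk) = 1` in the cyclic group `F_q^*`
gives the two formulas.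
-/

open Finset

section RootsOfUnitySums

variable {K : Type*} [Field K] [DecidableEq K] {u : K} {N : ℕ}

theorem geom_sum_eq_ite_of_pow_eq_one (hu : u ^ N = 1) :
    ∑ i ∈ range N, u ^ i = if u = 1 then (N : K) else 0 := by
  split_ifs with h
  · simp [h]
  · rw [geom_sum_eq h, hu, sub_self, zero_div]

theorem sum_range_filter_dvd_pow {c : ℕ} (hc : c ∣ N) (hu : u ^ N = 1) :
    ∑ k ∈ range N with c ∣ k, u ^ k = if u ^ c = 1 then ((N / c : ℕ) : K) else 0 := by
  obtain ⟨n, rfl⟩ := hc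
  rcases c.eq_zero_or_pos with rfl | hc
  · simp
  have hmul : {k ∈ range (c * n) | c ∣ k} =
      (range n).map ⟨(c * ·), mul_right_injective₀ hc.ne'⟩ := by
    ext k
    simp only [mem_filter, mem_range, mem_map, Function.Embedding.coeFn_mk]
    constructor
    · rintro ⟨hk, t, rfl⟩
      exact ⟨t, lt_of_mul_lt_mul_left' hk, rfl⟩
    · rintro ⟨t, ht, rfl⟩
      exact ⟨Nat.mul_lt_mul_of_pos_left ht hc, dvd_mul_right c t⟩
  rw [hmul, sum_map, Nat.mul_div_cancel_left _ hc]
  simp only [Function.Embedding.coeFn_mk, pow_mul]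
  exact geom_sum_eq_ite_of_pow_eq_one (by rwa [← pow_mul])

theorem sum_range_coprime_pow_of_eq_pow_mul_pow {a b i j : ℕ} (ha : a.Prime) (hb : b.Prime)
    (hab : a ≠ b) (hi : i ≠ 0) (hj : j ≠ 0) (hN : N = a ^ i * b ^ j) (hu : u ^ N = 1) :
    ∑ k ∈ range N with N.Coprime k, u ^ k =
      (if u = 1 then (N : K) else 0) - (if u ^ a = 1 then ((N / a : ℕ) : K) else 0)
        - (if u ^ b = 1 then ((N / b : ℕ) : K) else 0)
        + (if u ^ (a * b) = 1 then ((N / (a * b) : ℕ) : K) else 0) := by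
  have hcop : ∀ k, N.Coprime k ↔ ¬ a ∣ k ∧ ¬ b ∣ k := fun k => by
    rw [hN, Nat.coprime_mul_iff_left, Nat.coprime_pow_left_iff (Nat.pos_of_ne_zero hi),
      Nat.coprime_pow_left_iff (Nat.pos_of_ne_zero hj), ha.coprime_iff_not_dvd,
      hb.coprime_iff_not_dvd]
  have hdvd_mul : ∀ k, a * b ∣ k ↔ a ∣ k ∧ b ∣ k := fun k =>
    ⟨fun h => ⟨dvd_of_mul_right_dvd h, dvd_of_mul_left_dvd h⟩,
      fun h => ((Nat.coprime_primes ha hb).2 hab).mul_dvd_of_dvd_of_dvd h.1 h.2⟩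
  have hinclusion_exclusion : ∀ k, (if N.Coprime k then u ^ k else 0) =
      u ^ k - (if a ∣ k then u ^ k else 0) - (if b ∣ k then u ^ k else 0)
        + (if a * b ∣ k then u ^ k else 0) := fun k => by
    by_cases hak : a ∣ k <;> by_cases hbk : b ∣ k <;> simp [hcop, hdvd_mul, hak, hbk]
  have haN : a ∣ N := hN ▸ dvd_mul_of_dvd_left (dvd_pow_self a hi) _
  have hbN : b ∣ N := hN ▸ dvd_mul_of_dvd_right (dvd_pow_self b hj) _
  have habN : a * b ∣ N := hN ▸ mul_dvd_mul (dvd_pow_self a hi) (dvd_pow_self b hj)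
  rw [sum_filter, sum_congr rfl fun k _ => hinclusion_exclusion k, sum_add_distrib,
    sum_sub_distrib, sum_sub_distrib, ← sum_filter, ← sum_filter, ← sum_filter,
    geom_sum_eq_ite_of_pow_eq_one hu, sum_range_filter_dvd_pow haN hu,
    sum_range_filter_dvd_pow hbN hu, sum_range_filter_dvd_pow habN hu]

theorem sum_range_coprime_pow_two_mul_pow {ℓ m : ℕ} (hℓ : ℓ.Prime) (hℓ2 : ℓ ≠ 2) (hm : m ≠ 0)
    (hu : u ^ (2 * ℓ ^ m) = 1) :
    ∑ k ∈ range (2 * ℓ ^ m) with (2 * ℓ ^ m).Coprime k, u ^ k =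
      ((if u = 1 then 2 * (ℓ : K) else 0) - (if u ^ 2 = 1 then (ℓ : K) else 0)
        - (if u ^ ℓ = 1 then 2 else 0) + (if u ^ (2 * ℓ) = 1 then 1 else 0)) * ℓ ^ (m - 1) := by
  have hN : 2 * ℓ ^ m = 2 * ℓ * ℓ ^ (m - 1) := by
    rw [mul_assoc, ← pow_succ', Nat.sub_add_cancel (Nat.pos_of_ne_zero hm)]
  rw [sum_range_coprime_pow_of_eq_pow_mul_pow Nat.prime_two hℓ hℓ2.symm one_ne_zero hm
    (by rw [pow_one]) hu, hN, Nat.mul_div_cancel_left _ (Nat.mul_pos two_pos hℓ.pos),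
    mul_assoc, Nat.mul_div_cancel_left _ two_pos, mul_left_comm,
    Nat.mul_div_cancel_left _ hℓ.pos]
  push_cast
  split_ifs <;> ring

theorem sum_range_coprime_pow_ne_zero_iff {ℓ m : ℕ} (hℓ : ℓ.Prime) (hℓ2 : ℓ ≠ 2) (hm : m ≠ 0)
    (hℓK : (ℓ : K) ≠ 0) (hu : u ^ (2 * ℓ ^ m) = 1) :
    ∑ k ∈ range (2 * ℓ ^ m) with (2 * ℓ ^ m).Coprime k, u ^ k ≠ 0 ↔
      u ^ (2 * ℓ) = 1 ∧ (u ^ 2 = 1 → (ℓ : K) ≠ 1) := by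
  rw [sum_range_coprime_pow_two_mul_pow hℓ hℓ2 hm hu, mul_ne_zero_iff,
    and_iff_left (pow_ne_zero _ hℓK)]
  have hone : u ^ 2 = 1 → u ^ ℓ = 1 → u = 1 := fun h2 hℓ' => by
    simpa [(Nat.coprime_primes Nat.prime_two hℓ).2 hℓ2.symm] using pow_gcd_eq_one.2 ⟨h2, hℓ'⟩
  by_cases h2ℓ : u ^ (2 * ℓ) = 1
  · by_cases h1 : u = 1
    · subst h1
      simp only [one_pow, if_true, true_and, forall_const, ne_eq]
      rw [show (2 * ℓ - ℓ - 2 + 1 : K) = ℓ - 1 by ring, sub_eq_zero]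
    by_cases h2 : u ^ 2 = 1
    · have hℓ' : u ^ ℓ ≠ 1 := fun h => h1 (hone h2 h)
      simp only [h1, h2, hℓ', h2ℓ, if_true, if_false, true_and, forall_const, ne_eq]
      rw [show (0 - ℓ - 0 + 1 : K) = -(ℓ - 1) by ring, neg_eq_zero, sub_eq_zero]
    by_cases hℓ' : u ^ ℓ = 1 <;> norm_num [h1, h2, hℓ', h2ℓ]
  · have h2 : u ^ 2 ≠ 1 := fun h => h2ℓ (by rw [pow_mul, h, one_pow])
    have hℓ' : u ^ ℓ ≠ 1 := fun h => h2ℓ (by rw [mul_comm, pow_mul, h, one_pow])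
    have h1 : u ≠ 1 := fun h => h2 (by rw [h, one_pow])
    simp [h1, h2, hℓ', h2ℓ]

end RootsOfUnitySums

theorem Nat.ne_two_of_totient_two_mul_pow {ℓ m : ℕ} (hm : m ≠ 0)
    (h : (2 * ℓ ^ m).totient = (ℓ - 1) * ℓ ^ (m - 1)) : ℓ ≠ 2 := by
  rintro rfl
  rw [← pow_succ', Nat.totient_prime_pow_succ Nat.prime_two] at h
  have := Nat.pow_lt_pow_right (le_refl 2) (Nat.sub_lt (Nat.pos_of_ne_zero hm) one_pos)
  omega

theorem Nat.dvd_pow_sub_one_of_orderOf_dvd {p N e : ℕ} (hp : 0 < p)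
    (h : orderOf (p : ZMod N) ∣ e) : N ∣ p ^ e - 1 := by
  rw [← ZMod.natCast_eq_zero_iff, Nat.cast_sub (Nat.one_le_pow _ _ hp), Nat.cast_pow,
    orderOf_dvd_iff_pow_eq_one.1 h, Nat.cast_one, sub_self]

section PrimitiveRootMod

variable {p N : ℕ}

theorem injOn_pow_mod_range_totient (hp : orderOf (p : ZMod N) = N.totient) :
    Set.InjOn (fun i => p ^ i % N) (range N.totient) := by
  intro i hi j hj hij
  apply pow_injOn_Iio_orderOf (x := (p : ZMod N)) (by simpa [hp] using hi)
    (by simpa [hp] using hj)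
  simpa using congrArg (Nat.cast : ℕ → ZMod N) hij

theorem image_pow_mod_range_totient (hp : orderOf (p : ZMod N) = N.totient) :
    (range N.totient).image (fun i => p ^ i % N) = {k ∈ range N | N.Coprime k} := by
  refine eq_of_subset_of_card_le (fun k hk => ?_) ?_
  · obtain ⟨i, hi, rfl⟩ := mem_image.1 hk
    have hN : 0 < N := Nat.totient_pos.1 (Nat.zero_lt_of_lt (mem_range.1 hi))
    have hunit : IsUnit (p : ZMod N) :=
      (orderOf_pos_iff.1 (hp ▸ Nat.totient_pos.2 hN)).isUnit
    rw [mem_filter, mem_range, Nat.coprime_comm, ← ZMod.isUnit_iff_coprime, ZMod.natCast_mod,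
      Nat.cast_pow]
    exact ⟨Nat.mod_lt _ hN, hunit.pow i⟩
  · rw [card_image_of_injOn (injOn_pow_mod_range_totient hp), card_range,
      Nat.totient_eq_card_coprime]

theorem sum_range_totient_pow_pow {M : Type*} [Semiring M]
    (hp : orderOf (p : ZMod N) = N.totient) {u : M} (hu : u ^ N = 1) :
    ∑ i ∈ range N.totient, u ^ p ^ i = ∑ k ∈ range N with N.Coprime k, u ^ k := by
  rw [← image_pow_mod_range_totient hp, sum_image (injOn_pow_mod_range_totient hp)]
  exact sum_congr rfl fun i _ => pow_eq_pow_mod _ hu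

end PrimitiveRootMod

theorem IsCyclic.card_pow_eq_one_of_dvd {G : Type*} [Group G] [Fintype G] [DecidableEq G]
    [IsCyclic G] {k : ℕ} (hk : k ∣ Fintype.card G) : #{x : G | x ^ k = 1} = k := by
  have hk0 : k ≠ 0 := ne_of_gt (Nat.pos_of_dvd_of_pos hk Fintype.card_pos)
  calc #{x : G | x ^ k = 1} = ∑ d ∈ k.divisors, #{x : G | orderOf x = d} :=
        (sum_card_orderOf_eq_card_pow_eq_one hk0).symm
    _ = ∑ d ∈ k.divisors, d.totient := sum_congr rfl fun d hd =>
        IsCyclic.card_orderOf_eq_totient ((Nat.dvd_of_mem_divisors hd).trans hk)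
    _ = k := Nat.sum_totient k

theorem IsCyclic.card_pow_eq_one_and_not_pow_eq_one {G : Type*} [Group G] [Fintype G]
    [DecidableEq G] [IsCyclic G] {a b : ℕ} (hab : a ∣ b) (hb : b ∣ Fintype.card G) :
    #{x : G | x ^ b = 1 ∧ ¬ x ^ a = 1} = b - a := by
  have hsplit := card_filter_add_card_filter_not (s := {x : G | x ^ b = 1}) (· ^ a = 1)
  rw [filter_filter, filter_filter, filter_congr (q := (· ^ a = 1)) fun x _ =>
      and_iff_right_of_imp fun h => by obtain ⟨c, rfl⟩ := hab; rw [pow_mul, h, one_pow],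
    IsCyclic.card_pow_eq_one_of_dvd (hab.trans hb), IsCyclic.card_pow_eq_one_of_dvd hb]
    at hsplit
  omega

theorem sum_units_eq_sum_sub {G₀ M : Type*} [GroupWithZero G₀] [Fintype G₀] [DecidableEq G₀]
    [AddCommGroup M] (f : G₀ → M) : ∑ x : G₀ˣ, f x = ∑ x, f x - f 0 := by
  rw [← add_sum_erase univ f (mem_univ 0), add_sub_cancel_left]
  exact sum_bij' (fun x _ => x) (fun x hx => Units.mk0 x (ne_of_mem_erase hx))
    (by simp) (by simp) (by simp) (by simp) (by simp)

theorem IsPrimitiveRoot.sum_units_pow_val_mul {R : Type*} [CommRing R] [IsDomain R] {p : ℕ}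
    [Fact p.Prime] {ζ : R} (hζ : IsPrimitiveRoot ζ p) (t : ZMod p) :
    ∑ y : (ZMod p)ˣ, ζ ^ ((y : ZMod p) * t).val = if t = 0 then (p : R) - 1 else -1 := by
  have hsum := AddChar.sum_mulShift t (AddChar.zmodChar_primitive_of_primitive_root p hζ)
  simp only [AddChar.zmodChar_apply, ZMod.card] at hsum
  rw [sum_units_eq_sum_sub (fun y : ZMod p => ζ ^ (y * t).val), hsum]
  split_ifs <;> simp

theorem sum_units_sum_pow_val_trace_mul {R : Type*} [CommRing R] [IsDomain R] {p : ℕ}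
    [Fact p.Prime] {ζ : R} (hζ : IsPrimitiveRoot ζ p) {F ι : Type*} [Field F] [Fintype ι]
    [Algebra (ZMod p) F] (f : ι → F) :
    ∑ y : (ZMod p)ˣ, ∑ x : ι, ζ ^ (Algebra.trace (ZMod p) F (algebraMap (ZMod p) F y * f x)).val
      = ((p : R) - 1) * Fintype.card ι - p * #{x | Algebra.trace (ZMod p) F (f x) ≠ 0} := by
  simp_rw [← Algebra.smul_def, map_smul, smul_eq_mul]
  rw [sum_comm]
  simp_rw [hζ.sum_units_pow_val_mul, sum_ite, sum_const, nsmul_eq_mul]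
  rw [← card_univ, ← card_filter_add_card_filter_not (s := univ)
    (fun x => Algebra.trace (ZMod p) F (f x) = 0)]
  push_cast
  ring

theorem FiniteField.algebraMap_trace_eq_sum_range_pow {p e : ℕ} [Fact p.Prime] {F : Type*}
    [Field F] [Fintype F] [Algebra (ZMod p) F] (hF : Fintype.card F = p ^ e) (x : F) :
    algebraMap (ZMod p) F (Algebra.trace (ZMod p) F x) = ∑ i ∈ range e, x ^ p ^ i := by
  have hfinrank : Module.finrank (ZMod p) F = e := by
    have h := Module.card_eq_pow_finrank (K := ZMod p) (V := F)
    rw [hF, ZMod.card] at h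
    exact (Nat.pow_right_injective (Fact.out : p.Prime).two_le h).symm
  rw [algebraMap_trace_eq_sum_pow, hfinrank, Nat.card_zmod]

theorem FiniteField.trace_ne_zero_iff_of_pow_two_mul_pow_eq_one {p ℓ m : ℕ} [Fact p.Prime]
    {F : Type*} [Field F] [Fintype F] [Algebra (ZMod p) F] (hℓ : ℓ.Prime) (hℓ2 : ℓ ≠ 2)
    (hℓp : ℓ ≠ p) (hm : m ≠ 0)
    (hprim : orderOf (p : ZMod (2 * ℓ ^ m)) = (2 * ℓ ^ m).totient)
    (hF : Fintype.card F = p ^ (2 * ℓ ^ m).totient) {u : F} (hu : u ^ (2 * ℓ ^ m) = 1) :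
    Algebra.trace (ZMod p) F u ≠ 0 ↔ u ^ (2 * ℓ) = 1 ∧ (u ^ 2 = 1 → (ℓ : ZMod p) ≠ 1) := by
  classical
  have hℓF : (ℓ : F) ≠ 0 := by
    rw [← map_natCast (algebraMap (ZMod p) F), map_ne_zero, Ne, ZMod.natCast_eq_zero_iff]
    exact fun h => hℓp ((Nat.prime_dvd_prime_iff_eq Fact.out hℓ).1 h).symm
  have hℓ1 : (ℓ : F) ≠ 1 ↔ (ℓ : ZMod p) ≠ 1 := by
    rw [← map_natCast (algebraMap (ZMod p) F), ← map_one (algebraMap (ZMod p) F),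
      (algebraMap (ZMod p) F).injective.ne_iff]
  rw [← (algebraMap (ZMod p) F).injective.ne_iff, map_zero,
    algebraMap_trace_eq_sum_range_pow hF, sum_range_totient_pow_pow hprim hu,
    sum_range_coprime_pow_ne_zero_iff hℓ hℓ2 hm hℓF hu, hℓ1]

theorem FiniteField.card_units_trace_pow_ne_zero {p ℓ m d : ℕ} [Fact p.Prime] {F : Type*}
    [Field F] [Fintype F] [DecidableEq F] [Algebra (ZMod p) F] (hℓ : ℓ.Prime) (hℓ2 : ℓ ≠ 2)
    (hℓp : ℓ ≠ p) (hm : m ≠ 0)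
    (hprim : orderOf (p : ZMod (2 * ℓ ^ m)) = (2 * ℓ ^ m).totient)
    (hF : Fintype.card F = p ^ (2 * ℓ ^ m).totient) (hd : Fintype.card Fˣ = d * (2 * ℓ ^ m)) :
    #{x : Fˣ | Algebra.trace (ZMod p) F ((x : F) ^ d) ≠ 0} =
      if (ℓ : ZMod p) = 1 then d * (2 * ℓ) - d * 2 else d * (2 * ℓ) := by
  have htrace (x : Fˣ) : Algebra.trace (ZMod p) F ((x : F) ^ d) ≠ 0 ↔
      x ^ (d * (2 * ℓ)) = 1 ∧ (x ^ (d * 2) = 1 → (ℓ : ZMod p) ≠ 1) := by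
    rw [trace_ne_zero_iff_of_pow_two_mul_pow_eq_one hℓ hℓ2 hℓp hm hprim hF
      (by rw [← pow_mul, ← Units.val_pow_eq_pow_val, ← hd, pow_card_eq_one, Units.val_one])]
    simp only [← pow_mul, ← Units.val_pow_eq_pow_val, Units.val_eq_one]
  have h2ℓ : d * (2 * ℓ) ∣ Fintype.card Fˣ :=
    hd ▸ mul_dvd_mul_left d (mul_dvd_mul_left 2 (dvd_pow_self ℓ hm))
  rw [filter_congr fun x _ => htrace x]
  split_ifs with hℓ1
  · simp only [hℓ1, ne_eq, not_true_eq_false, imp_false]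
    exact IsCyclic.card_pow_eq_one_and_not_pow_eq_one
      (mul_dvd_mul_left d (dvd_mul_right 2 ℓ)) h2ℓ
  · simp only [hℓ1, ne_eq, not_false_eq_true, implies_true, and_true]
    exact IsCyclic.card_pow_eq_one_of_dvd h2ℓ

theorem stmt_8_general
    (p ℓ m : ℕ) [Fact (Nat.Prime p)]
    (hℓ : Nat.Prime ℓ) (hℓp : ℓ ≠ p) (hm : 0 < m)
    (N : ℕ) (hN : N = 2 * ℓ ^ m)
    (hprim : orderOf (p : ZMod N) = Nat.totient N)
    (e : ℕ) (he : e = Nat.totient N) (he' : e = (ℓ - 1) * ℓ ^ (m - 1))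
    (q : ℕ) (hq : q = p ^ e)
    (F : Type) [Field F] [Fintype F] [DecidableEq F] [Algebra (ZMod p) F]
    (hF : Fintype.card F = q)
    (ζ : ℂ) (hζ : ζ = Complex.exp (2 * (Real.pi : ℂ) * Complex.I / (p : ℂ)))
    (χ : F → ℂ) (hχ : ∀ c : F, χ c = ζ ^ (Algebra.trace (ZMod p) F c).val)
    (S : F → F → ℂ)
    (hS : ∀ a b : F, S a b = ∑ x : Fˣ, χ (a * (x : F) ^ ((q - 1) / N) + b * (x : F)))
    (w : ZMod p → F → ℂ)
    (hw : ∀ (α : ZMod p) (x : F), w α x =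
      ∑ y : (ZMod p)ˣ, ζ ^ (((-(y : ZMod p)) * α).val) *
        S (algebraMap (ZMod p) F (y : ZMod p)) (algebraMap (ZMod p) F (y : ZMod p) * x))
    :
    ((ℓ : ZMod p) = 1 →
      w 0 0 = (((q - 1) / ℓ ^ m : ℕ) : ℂ) *
        (((p : ℂ) - 1) * (ℓ : ℂ) ^ m - (p : ℂ) * (ℓ : ℂ) + (p : ℂ))) ∧
    ((ℓ : ZMod p) ≠ 1 →
      w 0 0 = (((q - 1) / ℓ ^ (m - 1) : ℕ) : ℂ) *
        (((p : ℂ) - 1) * (ℓ : ℂ) ^ (m - 1) - (p : ℂ))) := by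
  have hℓ2 : ℓ ≠ 2 := Nat.ne_two_of_totient_two_mul_pow hm.ne' (hN ▸ he ▸ he')
  have hNq : N ∣ q - 1 :=
    hq ▸ Nat.dvd_pow_sub_one_of_orderOf_dvd (Fact.out : p.Prime).pos (he ▸ hprim.dvd)
  set d := (q - 1) / N
  have hqN : q - 1 = d * N := (Nat.div_mul_cancel hNq).symm
  have hζ' : IsPrimitiveRoot ζ p :=
    hζ ▸ Complex.isPrimitiveRoot_exp p (Fact.out : p.Prime).ne_zero
  have hw00 : w 0 0 = ((p : ℂ) - 1) * (q - 1 : ℕ) -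
      p * #{x : Fˣ | Algebra.trace (ZMod p) F ((x : F) ^ d) ≠ 0} := by
    simp only [hw, hS, hχ, mul_zero, zero_mul, ZMod.val_zero, pow_zero, one_mul, add_zero]
    rw [sum_units_sum_pow_val_trace_mul hζ' (fun x : Fˣ => (x : F) ^ d), Fintype.card_units, hF]
  subst hN
  rw [FiniteField.card_units_trace_pow_ne_zero hℓ hℓ2 hℓp hm.ne' hprim (by rw [hF, hq, he])
    (by rw [Fintype.card_units, hF, hqN]), hqN] at hw00
  refine ⟨fun hℓ1 => ?_, fun hℓ1 => ?_⟩
  · have hle : d * 2 ≤ d * (2 * ℓ) := Nat.mul_le_mul_left d (by linarith [hℓ.two_le])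
    rw [hw00, if_pos hℓ1, hqN, show d * (2 * ℓ ^ m) = 2 * d * ℓ ^ m by ring,
      Nat.mul_div_cancel _ (pow_pos hℓ.pos m)]
    push_cast [Nat.cast_sub hle]
    ring
  · have hℓm : ℓ ^ m = ℓ * ℓ ^ (m - 1) := by rw [← pow_succ', Nat.sub_add_cancel hm]
    rw [hw00, if_neg hℓ1, hqN, hℓm,
      show d * (2 * (ℓ * ℓ ^ (m - 1))) = 2 * ℓ * d * ℓ ^ (m - 1) by ring,
      Nat.mul_div_cancel _ (pow_pos hℓ.pos _)]
    push_cast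
    ring

theorem stmt_8
    (p ℓ m : ℕ) [Fact (Nat.Prime p)] (hp2 : p ≠ 2)
    (hℓ : Nat.Prime ℓ) (hℓp : ℓ ≠ p) (hm : 0 < m)
    (N : ℕ) (hN : N = 2 * ℓ ^ m)
    (hprim : orderOf (p : ZMod N) = Nat.totient N)
    (e : ℕ) (he : e = Nat.totient N) (he' : e = (ℓ - 1) * ℓ ^ (m - 1))
    (q : ℕ) (hq : q = p ^ e)
    (F : Type) [Field F] [Fintype F] [DecidableEq F] [Algebra (ZMod p) F]
    (hF : Fintype.card F = q)
    (ζ : ℂ) (hζ : ζ = Complex.exp (2 * (Real.pi : ℂ) * Complex.I / (p : ℂ)))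
    (χ : F → ℂ) (hχ : ∀ c : F, χ c = ζ ^ (Algebra.trace (ZMod p) F c).val)
    (S : F → F → ℂ)
    (hS : ∀ a b : F, S a b = ∑ x : Fˣ, χ (a * (x : F) ^ ((q - 1) / N) + b * (x : F)))
    (w : ZMod p → F → ℂ)
    (hw : ∀ (α : ZMod p) (x : F), w α x =
      ∑ y : (ZMod p)ˣ, ζ ^ (((-(y : ZMod p)) * α).val) *
        S (algebraMap (ZMod p) F (y : ZMod p)) (algebraMap (ZMod p) F (y : ZMod p) * x))
    :
    ((ℓ : ZMod p) = 1 →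
      w 0 0 = (((q - 1) / ℓ ^ m : ℕ) : ℂ) *
        (((p : ℂ) - 1) * (ℓ : ℂ) ^ m - (p : ℂ) * (ℓ : ℂ) + (p : ℂ))) ∧
    ((ℓ : ZMod p) ≠ 1 →
      w 0 0 = (((q - 1) / ℓ ^ (m - 1) : ℕ) : ℂ) *
        (((p : ℂ) - 1) * (ℓ : ℂ) ^ (m - 1) - (p : ℂ))) :=
  stmt_8_general p ℓ m hℓ hℓp hm N hN hprim e he he' q hq F hF ζ hζ χ hχ S hS w hw
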